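/- If b ⊆ B^d is a blocker of size k for the d-player hat game, S_1,…,S_{2k} is a partition of [n] into nonempty parts, and Y = { y_I : I ⊆ [2k], |I| = k } where y_I ∈ {0,1}^n has support ⋃_{i∈I} S_i, then b × Y is a blocker for the (d+1)-player hat game on B^d × B. -/
import Mathlib


open Set

/-- Dictatorships in `{0,1}^n`. -/
def Dict (n : ℕ) (i : Fin n) : Set (Fin n → Bool) := {x | x i = true}

/-- A strategy for the `d`-player hat game. -/
def Strategy (n d : ℕ) : Type :=
  ∀ i : Fin d, ({j : Fin d // j ≠ i} → (Fin n → Bool)) → Fin n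

/-- The winning set of a strategy; the winning sets of `B^d` are exactly the sets
`winSet f` as `f` ranges over strategies. -/
def winSet {n d : ℕ} (f : Strategy n d) : Set (Fin d → Fin n → Bool) :=
  {x | ∀ i : Fin d, x i ∈ Dict n (f i (fun j => x j.1))}

/-- A blocker for the `d`-player game: a set intersecting every winning set. -/
def IsBlocker {n d : ℕ} (A : Set (Fin d → Fin n → Bool)) : Prop :=
  ∀ f : Strategy n d, (A ∩ winSet f).Nonempty

/-- If `b ⊆ B^d` is a blocker of size `k`, `S_1, …, S_{2k}` is a partition of `[n]` into
nonempty parts, and `Y = {y_I : I ⊆ [2k], |I| = k}` where `y_I` has support `⋃_{i ∈ I} S_i`,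
then `b × Y` is a blocker for the `(d+1)`-player game on `B^d × B`: it meets the winning
set of every strategy `(f, g)` with `f : B → (winning sets of B^d)` and
`g : B^d → {dictatorships}`. -/
theorem product_blocker (n d k : ℕ) (hk : 1 ≤ k)
    (b : Set (Fin d → Fin n → Bool)) (hb : IsBlocker b) (hbk : b.ncard = k)
    (S : Fin (2 * k) → Finset (Fin n))
    (hSne : ∀ i, (S i).Nonempty)
    (hSdisj : ∀ i j, i ≠ j → Disjoint (S i) (S j))
    (hScover : ∀ a : Fin n, ∃ i, a ∈ S i)
    (Y : Set (Fin n → Bool))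
    (hY : Y = {y | ∃ I : Finset (Fin (2 * k)), I.card = k ∧
      ∀ a : Fin n, y a = true ↔ ∃ i ∈ I, a ∈ S i})
    (f : (Fin n → Bool) → Strategy n d) (g : (Fin d → Fin n → Bool) → Fin n) :
    ∃ x ∈ b, ∃ y ∈ Y, x ∈ winSet (f y) ∧ y ∈ Dict n (g x) := by
  classical
  -- index of the part containing a
  choose idx hidx using hScover
  have hidx_unique : ∀ a i, a ∈ S i → i = idx a := by
    intro a i ha
    by_contra hne
    exact Finset.notMem_empty a ((hSdisj i (idx a) hne).le_bot (Finset.mem_inter.2 ⟨ha, hidx a⟩))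
  -- b is finite
  have hbfin : b.Finite := by
    by_contra h
    rw [Set.Infinite.ncard h] at hbk
    omega
  -- the set of indices used by g on b
  set T : Finset (Fin (2 * k)) := hbfin.toFinset.image (fun x => idx (g x)) with hT
  have hTcard : T.card ≤ k := by
    calc T.card ≤ hbfin.toFinset.card := Finset.card_image_le
    _ = k := by rw [Set.ncard_eq_toFinset_card' b] at hbk; simpa using hbk
  obtain ⟨I, hTI, _, hIcard⟩ :=
    Finset.exists_subsuperset_card_eq (T.subset_univ) hTcard
      (by simp [Fintype.card_fin]; omega)
  set y : Fin n → Bool := fun a => decide (idx a ∈ I) with hy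
  have hyY : y ∈ Y := by
    rw [hY]
    refine ⟨I, hIcard, fun a => ?_⟩
    simp only [hy, decide_eq_true_eq]
    constructor
    · intro h; exact ⟨idx a, h, hidx a⟩
    · rintro ⟨i, hi, hai⟩; rwa [hidx_unique a i hai] at hi
  obtain ⟨x, hxb, hxw⟩ := hb (f y)
  refine ⟨x, hxb, y, hyY, hxw, ?_⟩
  have : idx (g x) ∈ I := hTI (Finset.mem_image.2 ⟨x, hbfin.mem_toFinset.2 hxb, rfl⟩)
  simpa [Dict, hy] using this
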